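/- Suppose f, g are polymorphisms of a relational structure on A such that for every x,y ∈ A either f restricted to {x,y} is a semilattice operation and g(x,y,z) = f(f(x,y),z) on {x,y} (the 'red' case), or f(x,y) = x on {x,y} and g restricted to {x,y} is a majority operation (the 'yellow' case). Then u(x,y,z) = g(f(f(x,y),z), f(f(y,z),x), f(f(z,x),y)) satisfies u(x,x,y) = u(x,y,x) = u(y,x,x) for all x, y ∈ A, i.e., u is a ternary weak near-unanimity operation. -/

import Mathlib

/-- The pair `{x,y}` is red: `f` restricted to `{x,y}` is a semilattice operation
(in particular `{x,y}` is closed under `f`) and `g(p,q,r) = f(f(p,q),r)` on `{x,y}`. -/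
def RedPair {A : Type*} (f : A → A → A) (g : A → A → A → A) (x y : A) : Prop :=
  (∀ p ∈ ({x, y} : Set A), ∀ q ∈ ({x, y} : Set A), f p q ∈ ({x, y} : Set A)) ∧
  (∀ p ∈ ({x, y} : Set A), ∀ q ∈ ({x, y} : Set A), ∀ r ∈ ({x, y} : Set A),
    f (f p q) r = f p (f q r)) ∧
  (∀ p ∈ ({x, y} : Set A), ∀ q ∈ ({x, y} : Set A), f p q = f q p) ∧
  (∀ p ∈ ({x, y} : Set A), f p p = p) ∧
  (∀ p ∈ ({x, y} : Set A), ∀ q ∈ ({x, y} : Set A), ∀ r ∈ ({x, y} : Set A),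
    g p q r = f (f p q) r)

/-- The pair `{x,y}` is yellow: `f` is the first projection on `{x,y}` and `g`
restricted to `{x,y}` is a majority operation. -/
def YellowPair {A : Type*} (f : A → A → A) (g : A → A → A → A) (x y : A) : Prop :=
  (∀ p ∈ ({x, y} : Set A), ∀ q ∈ ({x, y} : Set A), f p q = p) ∧
  (∀ p ∈ ({x, y} : Set A), ∀ q ∈ ({x, y} : Set A),
    g p p q = p ∧ g p q p = p ∧ g q p p = p)

/-!
On a red pair every argument of `g` in `u(x,x,y)`, `u(x,y,x)`, `u(y,x,x)` collapses to the
join `f(x,y)`, and `g` is idempotent there, so all three values are `f(x,y)`. On a yellow pair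
`f` projects, the arguments of `g` are a permutation of `(x,x,y)`, and the majority law gives `x`.
-/

section

variable {A : Type*} {f : A → A → A} {g : A → A → A → A} {u : A → A → A → A} {x y : A}

lemma left_mem_pair (x y : A) : x ∈ ({x, y} : Set A) := Set.mem_insert x {y}

lemma right_mem_pair (x y : A) : y ∈ ({x, y} : Set A) := Set.mem_insert_of_mem x rfl

namespace RedPair

lemma join_mem (h : RedPair f g x y) : f x y ∈ ({x, y} : Set A) :=
  h.1 x (left_mem_pair x y) y (right_mem_pair x y)

lemma idem_left (h : RedPair f g x y) : f x x = x := h.2.2.2.1 x (left_mem_pair x y)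

lemma comm (h : RedPair f g x y) : f y x = f x y :=
  h.2.2.1 y (right_mem_pair x y) x (left_mem_pair x y)

lemma join_absorb_left (h : RedPair f g x y) : f (f x y) x = f x y := by
  have hx := left_mem_pair x y
  rw [h.2.2.1 _ h.join_mem x hx, ← h.2.1 x hx x hx y (right_mem_pair x y), h.idem_left]

lemma g_join_diag (h : RedPair f g x y) : g (f x y) (f x y) (f x y) = f x y := by
  have hs := h.join_mem
  rw [h.2.2.2.2 _ hs _ hs _ hs, h.2.2.2.1 _ hs, h.2.2.2.1 _ hs]

theorem wnu_eq (h : RedPair f g x y)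
    (hu : ∀ x y z : A, u x y z = g (f (f x y) z) (f (f y z) x) (f (f z x) y)) :
    u x x y = f x y ∧ u x y x = f x y ∧ u y x x = f x y := by
  simp only [hu, h.idem_left, h.comm, h.join_absorb_left, h.g_join_diag, and_self]

end RedPair

theorem YellowPair.wnu_eq (h : YellowPair f g x y)
    (hu : ∀ x y z : A, u x y z = g (f (f x y) z) (f (f y z) x) (f (f z x) y)) :
    u x x y = x ∧ u x y x = x ∧ u y x x = x := by
  have hx := left_mem_pair x y
  have hy := right_mem_pair x y
  simp only [hu, h.1 x hx x hx, h.1 x hx y hy, h.1 y hy x hx]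
  exact h.2 x hx y hy

end

/-- If every pair `{x,y}` is red or yellow, then
`u(x,y,z) = g(f(f(x,y),z), f(f(y,z),x), f(f(z,x),y))` is a ternary weak
near-unanimity operation: it is idempotent and `u(x,x,y) = u(x,y,x) = u(y,x,x)`. -/
theorem stmt6 {A : Type*} (f : A → A → A) (g : A → A → A → A)
    (hcolor : ∀ x y : A, RedPair f g x y ∨ YellowPair f g x y)
    (u : A → A → A → A)
    (hu : ∀ x y z : A, u x y z = g (f (f x y) z) (f (f y z) x) (f (f z x) y)) :
    (∀ x : A, u x x x = x) ∧
    (∀ x y : A, u x x y = u x y x ∧ u x y x = u y x x) := by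
  refine ⟨fun x => ?_, fun x y => ?_⟩
  · rcases hcolor x x with h | h
    · rw [(h.wnu_eq hu).1, h.idem_left]
    · exact (h.wnu_eq hu).1
  · obtain ⟨c, hxxy, hxyx, hyxx⟩ : ∃ c, u x x y = c ∧ u x y x = c ∧ u y x x = c := by
      rcases hcolor x y with h | h
      exacts [⟨_, h.wnu_eq hu⟩, ⟨_, h.wnu_eq hu⟩]
    exact ⟨hxxy.trans hxyx.symm, hxyx.trans hyxx.symm⟩
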